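/- (Singularity criterion of type C, k = n; the key step of the main theorem for C_n/P(α_n).) Let n ≥ 2 and let a_1,…,a_n be nonnegative integers. Then for every integer t, there exists a positive root α ∈ Φ⁺_C with ⟨w(t), α⟩ = 0 if and only if t belongs to the step-matrix entry set S^C_{n,a}. -/

import Mathlib

/-!
Write `r_i` for the coordinates of `λ + ρ`, so that `w(t)_i = r_i - t`. Since the `a_u` are
nonnegative, `r_i - r_j = Σ_{i<u≤j} a_u + (j - i) > 0` for `i < j`: the coordinates of `w(t)` are
pairwise distinct, so no root `e_p - e_q` is orthogonal to `w(t)`. Hence `w(t)` is singular iff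
`r_p + r_q = 2t` for some `p ≤ q`, and reindexing `(i, j) = (n - q, n - p)` (one-based) shows
that the numbers `(r_p + r_q) / 2` are exactly the elements of `S^C_{n,a}`.
-/

open Finset

/-- The positive roots of type `Cₙ`: `eₚ+e_q` (`p≤q`) and `eₚ-e_q` (`p<q`). -/
def PhiC (n : ℕ) : Set (Fin n → ℝ) :=
  {α | ∃ p q : Fin n, p ≤ q ∧
      α = fun i => (if i = p then (1:ℝ) else 0) + (if i = q then 1 else 0)} ∪
  {α | ∃ p q : Fin n, p < q ∧
      α = fun i => (if i = p then (1:ℝ) else 0) - (if i = q then 1 else 0)}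

/-- Standard inner product on `ℝⁿ`. -/
noncomputable def ip (n : ℕ) (v w : Fin n → ℝ) : ℝ := ∑ i, v i * w i

/-- The coordinate form of the weight `λ+ρ-tλ_n` for type `Cₙ`
(coordinates are indexed one-based). -/
noncomputable def wCn (n : ℕ) (a : ℕ → ℤ) (t : ℤ) : Fin n → ℝ := fun i =>
  (∑ u ∈ Icc (i.val + 1) (n - 1), (a u : ℝ)) + (a n : ℝ) + 1
    + ((n : ℝ) - (i.val + 1)) - (t : ℝ)

/-- The step-matrix entry set `S^C_{n,a}` (the case `k = n`). -/
def SCn (n : ℕ) (a : ℕ → ℤ) : Set ℚ :=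
  {x | ∃ i j : ℕ, 1 ≤ i ∧ i ≤ j ∧ j ≤ n ∧
    x = ((∑ u ∈ Icc (n + 1 - i) (n - 1), (a u : ℚ))
      + (∑ u ∈ Icc (n + 1 - j) (n - 1), (a u : ℚ)) + 2 * (a n : ℚ) + i + j) / 2}

lemma ip_single_add_single (n : ℕ) (v : Fin n → ℝ) (p q : Fin n) :
    ip n v (fun i => (if i = p then (1:ℝ) else 0) + (if i = q then 1 else 0)) = v p + v q := by
  simp [ip, mul_add, sum_add_distrib]

lemma ip_single_sub_single (n : ℕ) (v : Fin n → ℝ) (p q : Fin n) :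
    ip n v (fun i => (if i = p then (1:ℝ) else 0) - (if i = q then 1 else 0)) = v p - v q := by
  simp [ip, mul_sub, sum_sub_distrib]

lemma exists_mem_PhiC_ip_eq_zero_iff {n : ℕ} {v : Fin n → ℝ} (hv : Function.Injective v) :
    (∃ α ∈ PhiC n, ip n v α = 0) ↔ ∃ p q : Fin n, p ≤ q ∧ v p + v q = 0 := by
  constructor
  · rintro ⟨α, ⟨p, q, hpq, rfl⟩ | ⟨p, q, hpq, rfl⟩, hα⟩
    · exact ⟨p, q, hpq, by rwa [ip_single_add_single] at hα⟩
    · rw [ip_single_sub_single, sub_eq_zero] at hα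
      exact absurd (hv hα) hpq.ne
  · rintro ⟨p, q, hpq, hv0⟩
    exact ⟨_, Or.inl ⟨p, q, hpq, rfl⟩, by rwa [ip_single_add_single]⟩

/-- The zero-based `i`-th coordinate of `λ + ρ`, so that `wCn n a t i = weightRhoC n a i - t`. -/
def weightRhoC (n : ℕ) (a : ℕ → ℤ) (i : ℕ) : ℤ :=
  ∑ u ∈ Ioc i (n - 1), a u + a n + n - i

lemma wCn_apply (n : ℕ) (a : ℕ → ℤ) (t : ℤ) (i : Fin n) :
    wCn n a t i = ((weightRhoC n a i - t : ℤ) : ℝ) := by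
  simp only [wCn, weightRhoC, Icc_add_one_left_eq_Ioc]
  push_cast
  ring

lemma weightRhoC_strictAnti {n : ℕ} {a : ℕ → ℤ} (ha : ∀ u, 1 ≤ u → u ≤ n → 0 ≤ a u) :
    StrictAnti (fun i : Fin n => weightRhoC n a i) := by
  intro p q hpq
  have hpq' : p.val < q.val := hpq
  have hsplit : ∑ u ∈ Ioc p.val q.val, a u + ∑ u ∈ Ioc q.val (n - 1), a u
      = ∑ u ∈ Ioc p.val (n - 1), a u :=
    sum_Ioc_consecutive _ hpq'.le (by omega)
  have hnonneg : 0 ≤ ∑ u ∈ Ioc p.val q.val, a u :=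
    sum_nonneg fun u hu => by
      rw [mem_Ioc] at hu
      exact ha u (by omega) (by omega)
  simp only [weightRhoC]
  omega

lemma wCn_injective {n : ℕ} {a : ℕ → ℤ} (ha : ∀ u, 1 ≤ u → u ≤ n → 0 ≤ a u) (t : ℤ) :
    Function.Injective (wCn n a t) := by
  intro p q hpq
  simp only [wCn_apply, Int.cast_inj, sub_left_inj] at hpq
  exact (weightRhoC_strictAnti ha).injective hpq

lemma mem_SCn_iff (n : ℕ) (a : ℕ → ℤ) (x : ℚ) :
    x ∈ SCn n a ↔ ∃ p q : Fin n, p ≤ q ∧ x = (weightRhoC n a p + weightRhoC n a q) / 2 := by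
  have hsum (m : ℕ) (hm : m ≤ n) :
      ∑ u ∈ Icc (n + 1 - m) (n - 1), (a u : ℚ) = ∑ u ∈ Ioc (n - m) (n - 1), (a u : ℚ) := by
    rw [← Icc_add_one_left_eq_Ioc, show n - m + 1 = n + 1 - m by omega]
  simp only [SCn, weightRhoC, Set.mem_ofPred_eq, Fin.le_def]
  constructor
  · rintro ⟨i, j, hi, hij, hjn, rfl⟩
    refine ⟨⟨n - j, by omega⟩, ⟨n - i, by omega⟩, by dsimp only; omega, ?_⟩
    rw [hsum i (by omega), hsum j (by omega)]
    push_cast [Nat.cast_sub (show i ≤ n by omega), Nat.cast_sub hjn]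
    ring
  · rintro ⟨p, q, hpq, rfl⟩
    refine ⟨n - q, n - p, by omega, by omega, by omega, ?_⟩
    rw [hsum (n - q) (by omega), hsum (n - p) (by omega),
      Nat.sub_sub_self q.isLt.le, Nat.sub_sub_self p.isLt.le]
    push_cast [Nat.cast_sub q.isLt.le, Nat.cast_sub p.isLt.le]
    ring

theorem singular_criterion_C_eq_general (n : ℕ)
    (a : ℕ → ℤ) (ha : ∀ u, 1 ≤ u → u ≤ n → 0 ≤ a u) (t : ℤ) :
    (∃ α ∈ PhiC n, ip n (wCn n a t) α = 0) ↔ (t : ℚ) ∈ SCn n a := by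
  rw [exists_mem_PhiC_ip_eq_zero_iff (wCn_injective ha t), mem_SCn_iff]
  refine exists₂_congr fun p q => and_congr_right fun _ => ?_
  rw [wCn_apply, wCn_apply, ← Int.cast_add, Int.cast_eq_zero, eq_div_iff two_ne_zero]
  norm_cast
  omega

/-- Singularity criterion of type `C`, `k = n`: `λ+ρ-tλ_n` is singular iff `t` is an
entry of the step matrix `T^C_{n,λ}`. -/
theorem singular_criterion_C_eq (n : ℕ) (hn : 2 ≤ n)
    (a : ℕ → ℤ) (ha : ∀ u, 1 ≤ u → u ≤ n → 0 ≤ a u) (t : ℤ) :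
    (∃ α ∈ PhiC n, ip n (wCn n a t) α = 0) ↔ (t : ℚ) ∈ SCn n a :=
  singular_criterion_C_eq_general n a ha t
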